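/- Let Q be an integral commutative quantale. For a proper ideal I of Q, the following are equivalent: (1) I is semiprime (x² ∈ I implies x ∈ I); (2) I is an intersection of prime ideals; (3) I is a radical ideal (R(I) = I). -/

import Mathlib

class ICQuantale (Q : Type*) extends CompleteLattice Q, Mul Q where
  mul_assoc : ∀ x y z : Q, x * y * z = x * (y * z)
  mul_comm : ∀ x y : Q, x * y = y * x
  mul_sSup : ∀ (x : Q) (s : Set Q), x * sSup s = ⨆ y ∈ s, x * y
  mul_top : ∀ x : Q, x * ⊤ = x

variable {Q : Type*} [ICQuantale Q]

def qpow (x : Q) : ℕ → Q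
  | 0 => ⊤
  | n+1 => qpow x n * x

def IsIdeal (I : Set Q) : Prop :=
  I.Nonempty ∧ (∀ x ∈ I, ∀ y ∈ I, x ⊔ y ∈ I) ∧ (∀ x ∈ I, ∀ l, l ≤ x → l ∈ I)

def res (I J : Set Q) : Set Q := {x | ∀ j ∈ J, x * j ∈ I}

def prodIdeal (I J : Set Q) : Set Q :=
  {l | ∃ F : Finset (Q × Q), (∀ p ∈ F, p.1 ∈ I ∧ p.2 ∈ J) ∧ l ≤ F.sup (fun p => p.1 * p.2)}

def rad (I : Set Q) : Set Q := {x | ∃ n, 1 ≤ n ∧ qpow x n ∈ I}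

def IsPrimeIdeal (P : Set Q) : Prop :=
  IsIdeal P ∧ P ≠ Set.univ ∧ ∀ x y : Q, x * y ∈ P → x ∈ P ∨ y ∈ P

def IsPrimaryIdeal (I : Set Q) : Prop :=
  IsIdeal I ∧ I ≠ Set.univ ∧ ∀ x y : Q, x * y ∈ I → x ∈ I ∨ ∃ n, 1 ≤ n ∧ qpow y n ∈ I

def MultClosed (S : Set Q) : Prop := ⊤ ∈ S ∧ ∀ x ∈ S, ∀ y ∈ S, x * y ∈ S

def ann (S : Set Q) : Set Q := {x | ∀ s ∈ S, x * s = ⊥}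

/-! A semiprime ideal `I` contains `x` as soon as it contains some power of `x`, since the powers
`x ^ (2 ^ k)` can be peeled off one square root at a time; so `I` is radical. Given `a ∉ I`, the
ideals containing `I` and avoiding the powers of `a` have, by Zorn, a maximal member, and an ideal
maximal among those avoiding a multiplicatively closed set is prime. Hence `I` is the intersection
of the primes containing it, and intersections of primes are clearly semiprime. -/

namespace ICQuantale

theorem mul_sup (x a b : Q) : x * (a ⊔ b) = x * a ⊔ x * b := by
  simpa only [sSup_pair, iSup_pair] using ICQuantale.mul_sSup x {a, b}

theorem sup_mul (a b x : Q) : (a ⊔ b) * x = a * x ⊔ b * x := by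
  simp only [ICQuantale.mul_comm _ x, mul_sup]

theorem mul_le_mul_left' {a b : Q} (h : a ≤ b) (x : Q) : x * a ≤ x * b := by
  rw [← sup_eq_right.mpr h, mul_sup]
  exact le_sup_left

theorem mul_le_mul {a b c d : Q} (hab : a ≤ b) (hcd : c ≤ d) : a * c ≤ b * d :=
  calc a * c ≤ a * d := mul_le_mul_left' hcd a
    _ = d * a := ICQuantale.mul_comm a d
    _ ≤ d * b := mul_le_mul_left' hab d
    _ = b * d := ICQuantale.mul_comm d b

theorem mul_le_left (x y : Q) : x * y ≤ x := by
  simpa only [ICQuantale.mul_top] using mul_le_mul_left' (le_top : y ≤ ⊤) x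

theorem mul_le_right (x y : Q) : x * y ≤ y :=
  ICQuantale.mul_comm x y ▸ mul_le_left y x

theorem top_mul (x : Q) : ⊤ * x = x := by
  rw [ICQuantale.mul_comm, ICQuantale.mul_top]

theorem sup_mul_sup_le (a b c d : Q) : (a ⊔ b) * (c ⊔ d) ≤ a ⊔ c ⊔ b * d := by
  rw [sup_mul, mul_sup, mul_sup]
  refine sup_le (sup_le ?_ ?_) (sup_le ?_ le_sup_right)
  · exact (mul_le_left a c).trans (le_sup_left.trans le_sup_left)
  · exact (mul_le_left a d).trans (le_sup_left.trans le_sup_left)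
  · exact (mul_le_right b c).trans (le_sup_right.trans le_sup_left)

end ICQuantale

open ICQuantale

theorem qpow_one (x : Q) : qpow x 1 = x :=
  top_mul x

theorem qpow_add (x : Q) (m n : ℕ) : qpow x (m + n) = qpow x m * qpow x n := by
  induction n with
  | zero => exact (ICQuantale.mul_top _).symm
  | succ n ih => rw [← add_assoc, qpow, qpow, ih, ICQuantale.mul_assoc]

theorem qpow_antitone (x : Q) : Antitone (qpow x) := by
  intro m n hmn
  obtain ⟨k, rfl⟩ := Nat.exists_eq_add_of_le hmn
  rw [qpow_add]
  exact mul_le_left _ _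

theorem multClosed_range_qpow (a : Q) : MultClosed (Set.range (qpow a)) :=
  ⟨⟨0, rfl⟩, by rintro _ ⟨m, rfl⟩ _ ⟨n, rfl⟩; exact ⟨m + n, qpow_add a m n⟩⟩

namespace IsIdeal

variable {I : Set Q}

theorem mem_of_le (hI : IsIdeal I) {x y : Q} (hx : x ∈ I) (hyx : y ≤ x) : y ∈ I :=
  hI.2.2 x hx y hyx

theorem sup_mem (hI : IsIdeal I) {x y : Q} (hx : x ∈ I) (hy : y ∈ I) : x ⊔ y ∈ I :=
  hI.2.1 x hx y hy

theorem bot_mem (hI : IsIdeal I) : (⊥ : Q) ∈ I :=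
  let ⟨_, hx⟩ := hI.1
  hI.mem_of_le hx bot_le

theorem sUnion_of_isChain {c : Set (Set Q)} (hc : IsChain (· ⊆ ·) c) (hne : c.Nonempty)
    (h : ∀ J ∈ c, IsIdeal J) : IsIdeal (⋃₀ c) := by
  refine ⟨?_, ?_, ?_⟩
  · obtain ⟨J, hJ⟩ := hne
    obtain ⟨x, hx⟩ := (h J hJ).1
    exact ⟨x, J, hJ, hx⟩
  · rintro x ⟨J₁, hJ₁, hx⟩ y ⟨J₂, hJ₂, hy⟩
    rcases hc.total hJ₁ hJ₂ with h₁₂ | h₂₁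
    · exact ⟨J₂, hJ₂, (h J₂ hJ₂).sup_mem (h₁₂ hx) hy⟩
    · exact ⟨J₁, hJ₁, (h J₁ hJ₁).sup_mem hx (h₂₁ hy)⟩
  · rintro x ⟨J, hJ, hx⟩ y hyx
    exact ⟨J, hJ, (h J hJ).mem_of_le hx hyx⟩

end IsIdeal

def idealAdjoin (M : Set Q) (z : Q) : Set Q := {l | ∃ m ∈ M, l ≤ m ⊔ z}

section idealAdjoin

variable {M : Set Q}

theorem IsIdeal.idealAdjoin (hM : IsIdeal M) (z : Q) : IsIdeal (idealAdjoin M z) := by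
  refine ⟨⟨z, ⊥, hM.bot_mem, le_sup_right⟩, ?_, ?_⟩
  · rintro x ⟨m₁, hm₁, hx⟩ y ⟨m₂, hm₂, hy⟩
    exact ⟨m₁ ⊔ m₂, hM.sup_mem hm₁ hm₂,
      sup_le (hx.trans (sup_le_sup_right le_sup_left z))
        (hy.trans (sup_le_sup_right le_sup_right z))⟩
  · rintro x ⟨m, hm, hx⟩ y hyx
    exact ⟨m, hm, hyx.trans hx⟩

theorem subset_idealAdjoin (M : Set Q) (z : Q) : M ⊆ idealAdjoin M z :=
  fun m hm => ⟨m, hm, le_sup_left⟩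

theorem mem_idealAdjoin_self (hM : IsIdeal M) (z : Q) : z ∈ idealAdjoin M z :=
  ⟨⊥, hM.bot_mem, le_sup_right⟩

end idealAdjoin

theorem exists_subset_maximal_disjoint {I S : Set Q} (hI : IsIdeal I) (hIS : Disjoint I S) :
    ∃ M, I ⊆ M ∧ Maximal (fun J => IsIdeal J ∧ Disjoint J S) M := by
  refine zorn_subset_nonempty {J | IsIdeal J ∧ Disjoint J S} ?_ I ⟨hI, hIS⟩
  intro c hcS hc hne
  exact ⟨⋃₀ c, ⟨IsIdeal.sUnion_of_isChain hc hne fun J hJ => (hcS hJ).1,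
    Set.disjoint_sUnion_left.2 fun J hJ => (hcS hJ).2⟩, fun _ => Set.subset_sUnion_of_mem⟩

theorem isPrimeIdeal_of_maximal_disjoint {S M : Set Q} (hS : MultClosed S)
    (hM : Maximal (fun J => IsIdeal J ∧ Disjoint J S) M) : IsPrimeIdeal M := by
  obtain ⟨⟨hMI, hMS⟩, hmax⟩ := hM
  refine ⟨hMI, fun h => Set.disjoint_left.1 hMS (h ▸ Set.mem_univ ⊤) hS.1, ?_⟩
  have meets : ∀ z ∉ M, ∃ s ∈ S, ∃ m ∈ M, s ≤ m ⊔ z := by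
    intro z hz
    by_contra! h
    have hdisj : Disjoint (idealAdjoin M z) S :=
      Set.disjoint_left.2 fun s ⟨m, hm, hs⟩ hsS => h s hsS m hm hs
    exact hz <|
      hmax ⟨hMI.idealAdjoin z, hdisj⟩ (subset_idealAdjoin M z) (mem_idealAdjoin_self hMI z)
  intro x y hxy
  by_contra! hxy'
  obtain ⟨s, hs, m₁, hm₁, hsx⟩ := meets x hxy'.1
  obtain ⟨t, ht, m₂, hm₂, hty⟩ := meets y hxy'.2
  have hst : s * t ∈ M := hMI.mem_of_le (hMI.sup_mem (hMI.sup_mem hm₁ hm₂) hxy)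
    ((mul_le_mul hsx hty).trans (sup_mul_sup_le m₁ x m₂ y))
  exact Set.disjoint_left.1 hMS hst (hS.2 s hs t ht)

def IsSemiprime (I : Set Q) : Prop := ∀ x : Q, x * x ∈ I → x ∈ I

section IsSemiprime

variable {I : Set Q}

theorem IsSemiprime.mem_of_qpow_mem (hsp : IsSemiprime I) (hI : IsIdeal I) {x : Q} {n : ℕ}
    (hxn : qpow x n ∈ I) : x ∈ I := by
  have two_pow : ∀ k, qpow x (2 ^ k) ∈ I → x ∈ I := by
    intro k
    induction k with
    | zero => rw [pow_zero, qpow_one]; exact id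
    | succ k ih => exact fun h => ih (hsp _ (by rwa [← qpow_add, ← two_mul, ← pow_succ']))
  exact two_pow n (hI.mem_of_le hxn (qpow_antitone x Nat.lt_two_pow_self.le))

theorem IsSemiprime.exists_isPrimeIdeal_notMem (hsp : IsSemiprime I) (hI : IsIdeal I) {a : Q}
    (ha : a ∉ I) : ∃ P, IsPrimeIdeal P ∧ I ⊆ P ∧ a ∉ P := by
  have hdisj : Disjoint I (Set.range (qpow a)) :=
    Set.disjoint_left.2 fun x hx ⟨_, hn⟩ => ha (hsp.mem_of_qpow_mem hI (hn ▸ hx))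
  obtain ⟨M, hIM, hM⟩ := exists_subset_maximal_disjoint hI hdisj
  exact ⟨M, isPrimeIdeal_of_maximal_disjoint (multClosed_range_qpow a) hM, hIM,
    fun haM => Set.disjoint_left.1 hM.1.2 haM ⟨1, qpow_one a⟩⟩

theorem IsSemiprime.eq_sInter_isPrimeIdeal (hsp : IsSemiprime I) (hI : IsIdeal I) :
    I = ⋂₀ {P | IsPrimeIdeal P ∧ I ⊆ P} := by
  refine (Set.subset_sInter fun P hP => hP.2).antisymm fun x hx => ?_
  by_contra hxI
  obtain ⟨P, hP, hIP, hxP⟩ := hsp.exists_isPrimeIdeal_notMem hI hxI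
  exact hxP (hx P ⟨hP, hIP⟩)

theorem isSemiprime_sInter {𝒮 : Set (Set Q)} (h𝒮 : ∀ P ∈ 𝒮, IsPrimeIdeal P) :
    IsSemiprime (⋂₀ 𝒮) :=
  fun x hx P hP => ((h𝒮 P hP).2.2 x x (hx P hP)).elim id id

theorem IsSemiprime.rad_eq (hsp : IsSemiprime I) (hI : IsIdeal I) : rad I = I :=
  Set.Subset.antisymm (fun _ ⟨_, _, hxn⟩ => hsp.mem_of_qpow_mem hI hxn)
    fun x hx => ⟨1, le_rfl, (qpow_one x).symm ▸ hx⟩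

theorem isSemiprime_of_rad_eq (h : rad I = I) : IsSemiprime I := by
  intro x hx
  rw [← h]
  exact ⟨2, one_le_two, by rwa [qpow, qpow_one]⟩

end IsSemiprime

theorem stmt16_general {I : Set Q} (hI : IsIdeal I) :
    ((∀ x : Q, x * x ∈ I → x ∈ I) ↔
        ∃ 𝒮 : Set (Set Q), (∀ P ∈ 𝒮, IsPrimeIdeal P) ∧ I = ⋂₀ 𝒮) ∧
    ((∀ x : Q, x * x ∈ I → x ∈ I) ↔ rad I = I) :=
  ⟨⟨fun hsp => ⟨_, fun _ hP => hP.1, IsSemiprime.eq_sInter_isPrimeIdeal hsp hI⟩,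
      fun ⟨_, h𝒮, hI𝒮⟩ => hI𝒮 ▸ isSemiprime_sInter h𝒮⟩,
    ⟨fun hsp => IsSemiprime.rad_eq hsp hI, isSemiprime_of_rad_eq⟩⟩

theorem stmt16 {I : Set Q} (hI : IsIdeal I) (hproper : I ≠ Set.univ) :
    ((∀ x : Q, x * x ∈ I → x ∈ I) ↔
        ∃ 𝒮 : Set (Set Q), (∀ P ∈ 𝒮, IsPrimeIdeal P) ∧ I = ⋂₀ 𝒮) ∧
    ((∀ x : Q, x * x ∈ I → x ∈ I) ↔ rad I = I) :=
  stmt16_general hI
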